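/- Let B be a left semi-brace. Then the following are equivalent: (i) B^[α] = E for some positive integer α; (ii) B^(β) = E and B^γ = E for some positive integers β and γ. (In other words, B is strongly nilpotent if and only if B is both right nilpotent and left nilpotent.) -/
import Mathlib


/-- A left semi-brace: `(B,+)` is a left cancellative semigroup, `(B,*)` is a group
(whose identity `1` plays the role of `0` in the additive notation of the paper, and
`a⁻¹` plays the role of `a⁻`), and `a ∘ (b + c) = a ∘ b + a ∘ (a⁻ + c)` holds. -/
class LeftSemiBrace (B : Type*) extends Group B, Add B where
  add_assoc : ∀ a b c : B, a + b + c = a + (b + c)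
  add_left_cancel : ∀ a b c : B, a + b = a + c → b = c
  circ_add : ∀ a b c : B, a * (b + c) = a * b + a * (a⁻¹ + c)

namespace LeftSemiBrace

variable {B : Type*} [LeftSemiBrace B]

/-- The set `E` of additive idempotents. -/
def E (B : Type*) [LeftSemiBrace B] : Set B := {e | e + e = e}

/-- The set `G = B + 0`. -/
def G (B : Type*) [LeftSemiBrace B] : Set B := {x | ∃ b : B, x = b + 1}

/-- `λ_a (b) = a ∘ (a⁻ + b)`. -/
def lam (a b : B) : B := a * (a⁻¹ + b)

/-- `ρ_b (a) = (a⁻ + b)⁻ ∘ b`. -/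
def rho (b a : B) : B := (a⁻¹ + b)⁻¹ * b

/-- `a · b = λ_a(a⁻) + a ∘ b + λ_b(b⁻)`. -/
def dot (a b : B) : B := lam a a⁻¹ + a * b + lam b b⁻¹

/-- The group part `g_b = b + 0` of an element `b`. -/
def gp (b : B) : B := b + 1

/-- The additive inverse (within the group `(G,+)`) of the group part of an element:
for `g ∈ G` one has `neg g = -g`, since `-g_a = λ_a(a⁻) = a ∘ (a⁻ + a⁻)`. -/
def neg (a : B) : B := a * (a⁻¹ + a⁻¹)

/-- The idempotent part `e_b = -g_b + b` of an element `b`. -/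
def ep (b : B) : B := neg (gp b) + b

/-- `S` is a subsemigroup of `(B,+)`. -/
def IsAddSubsemigroup (S : Set B) : Prop := ∀ x ∈ S, ∀ y ∈ S, x + y ∈ S

/-- `S` is a subgroup of the multiplicative group `(B,∘)`. -/
def IsCircSubgroup (S : Set B) : Prop :=
  (1 : B) ∈ S ∧ (∀ x ∈ S, ∀ y ∈ S, x * y ∈ S) ∧ ∀ x ∈ S, x⁻¹ ∈ S

/-- `S` is a normal subgroup of the multiplicative group `(B,∘)`. -/
def IsCircNormal (S : Set B) : Prop :=
  IsCircSubgroup S ∧ ∀ x ∈ S, ∀ b : B, b * x * b⁻¹ ∈ S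

/-- `S` is a subgroup of the group `(G,+)`. -/
def IsAddSubgroupOfG (S : Set B) : Prop :=
  S ⊆ G B ∧ (1 : B) ∈ S ∧ (∀ x ∈ S, ∀ y ∈ S, x + y ∈ S) ∧ ∀ x ∈ S, neg x ∈ S

/-- `S` is a normal subgroup of the group `(G,+)`. -/
def IsAddNormalSubgroupOfG (S : Set B) : Prop :=
  IsAddSubgroupOfG S ∧ ∀ g ∈ G B, ∀ x ∈ S, g + x + neg g ∈ S

/-- `I` is an ideal of the left semi-brace `B` (Definition 17 of Catino–Colazzo–Stefanelli):
`I` is a subsemigroup of `(B,+)`, a normal subgroup of `(B,∘)`, `I ∩ G` is a normal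
subgroup of `(G,+)`, `ρ_b(n) ∈ I` for all `b ∈ B`, `n ∈ I ∩ G`, and `λ_g(e) ∈ I` for all
`g ∈ G`, `e ∈ I ∩ E`. -/
def IsIdeal (I : Set B) : Prop :=
  IsAddSubsemigroup I ∧ IsCircNormal I ∧ IsAddNormalSubgroupOfG (I ∩ G B) ∧
    (∀ b : B, ∀ n ∈ I ∩ G B, rho b n ∈ I) ∧
    (∀ g ∈ G B, ∀ e ∈ I ∩ E B, lam g e ∈ I)

/-- `I` is a left ideal of the left semi-brace `B`. -/
def IsLeftIdeal (I : Set B) : Prop :=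
  (∀ x ∈ I, x + 1 ∈ I) ∧ IsAddSubgroupOfG (I ∩ G B) ∧
    (∀ g ∈ G B, ∀ x ∈ I, lam g x ∈ I) ∧ IsCircSubgroup I

/-- The subgroup of `(G,+)` generated by a subset `S` of `G`. -/
def addClosure (S : Set B) : Set B :=
  ⋂₀ {T : Set B | S ⊆ T ∧ (1 : B) ∈ T ∧ (∀ x ∈ T, ∀ y ∈ T, x + y ∈ T) ∧ ∀ x ∈ T, neg x ∈ T}

/-- `X · Y`: the subgroup of `(G,+)` generated by `{x · y : x ∈ X, y ∈ Y}`. -/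
def dotSet (X Y : Set B) : Set B := addClosure {z | ∃ x ∈ X, ∃ y ∈ Y, z = dot x y}

/-- `S + E = {s + e : s ∈ S, e ∈ E}`. -/
def addE (S : Set B) : Set B := {z | ∃ s ∈ S, ∃ e ∈ E B, z = s + e}

/-- The right series of `B`: `rightSeries B n = B^(n+1)`, where `B^(1) = B` and
`B^(n+1) = B^(n) · B + E`. -/
def rightSeries (B : Type*) [LeftSemiBrace B] : ℕ → Set B
  | 0 => Set.univ
  | n + 1 => addE (dotSet (rightSeries B n) Set.univ)

/-- The left series of `B`: `leftSeries B n = B^(n+1)`, where `B^1 = B` and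
`B^(n+1) = B · B^n + E`. -/
def leftSeries (B : Type*) [LeftSemiBrace B] : ℕ → Set B
  | 0 => Set.univ
  | n + 1 => addE (dotSet Set.univ (leftSeries B n))

/-- The right series of the skew left brace `G`: `rightSeriesG B n = G^(n+1)`, where
`G^(1) = G` and `G^(n+1) = G^(n) · G`. -/
def rightSeriesG (B : Type*) [LeftSemiBrace B] : ℕ → Set B
  | 0 => G B
  | n + 1 => dotSet (rightSeriesG B n) (G B)

/-- The series `bracketSeries B n = B^[n+1]`, where `B^[1] = B` and `B^[n+1] = H_n + E`
with `H_n` the subgroup of `(G,+)` generated by `⋃_{i=1}^{n} B^[i] · B^[n+1-i]`. -/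
def bracketSeries (B : Type*) [LeftSemiBrace B] : ℕ → Set B
  | 0 => Set.univ
  | n + 1 =>
      addE (addClosure (⋃ i : Fin (n + 1),
        dotSet (bracketSeries B i.1) (bracketSeries B (n - i.1))))
  decreasing_by
  · exact i.isLt
  · exact Nat.lt_succ_of_le (Nat.sub_le n i.1)

/-- The socle `Soc(B) = {a ∈ B : ρ_a = ρ_0, λ_a = λ_0}`. -/
def Soc (B : Type*) [LeftSemiBrace B] : Set B :=
  {a | rho a = rho (1 : B) ∧ lam a = lam (1 : B)}

/-- The generalized socle `Zoc(B) = Soc(B) + E`. -/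
def Zoc (B : Type*) [LeftSemiBrace B] : Set B :=
  {z | ∃ a ∈ Soc B, ∃ e ∈ E B, z = a + e}

/-- The lower central series of the group `(G,+)`:  `γ_1 = G` and `γ_{n+1}` is the
subgroup of `(G,+)` generated by the additive commutators `-x - y + x + y` with
`x ∈ γ_n`, `y ∈ G`. -/
def lowerCentralSeriesG (B : Type*) [LeftSemiBrace B] : ℕ → Set B
  | 0 => G B
  | n + 1 => addClosure
      {z | ∃ x ∈ lowerCentralSeriesG B n, ∃ y ∈ G B, z = neg x + neg y + x + y}

/-- The group `(G,+)` is nilpotent. -/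
def IsNilpotentGAdd (B : Type*) [LeftSemiBrace B] : Prop :=
  ∃ n : ℕ, lowerCentralSeriesG B n = {(1 : B)}

/-! ### Basic identities in a left semi-brace -/

lemma one_add (a : B) : (1 : B) + a = a := by
  have h := circ_add (1 : B) (1 : B) a
  simp only [one_mul, inv_one] at h
  exact (add_left_cancel 1 a (1 + a) h).symm

lemma mul_add_lam (a b c : B) : a * (b + c) = a * b + lam a c :=
  circ_add a b c

lemma mul_eq_add_lam (a c : B) : a * c = a + lam a c := by
  have h := mul_add_lam a 1 c
  rw [one_add, mul_one] at h
  exact h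

lemma lam_add (a b c : B) : lam a (b + c) = lam a b + lam a c := by
  show a * (a⁻¹ + (b + c)) = lam a b + lam a c
  rw [← add_assoc, mul_add_lam]
  rfl

lemma lam_lam (a b c : B) : lam a (lam b c) = lam (a * b) c := by
  show a * (a⁻¹ + b * (b⁻¹ + c)) = (a * b) * ((a * b)⁻¹ + c)
  rw [mul_inv_rev, mul_assoc, mul_add_lam b (b⁻¹ * a⁻¹) c, ← mul_assoc,
    mul_inv_cancel, one_mul]
  rfl

lemma lam_idem {e : B} (he : e + e = e) (a : B) : lam a e + lam a e = lam a e := by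
  rw [← lam_add, he]

lemma add_neg_self (a : B) : a + neg a = 1 := by
  have h : a * (1 + a⁻¹) = a * 1 + a * (a⁻¹ + a⁻¹) := circ_add a 1 a⁻¹
  rw [one_add, mul_inv_cancel, mul_one] at h
  exact h.symm

lemma neg_add_one (a : B) : neg a + 1 = neg a := by
  have hc : a⁻¹ + (neg a⁻¹ + a⁻¹) = a⁻¹ := by
    rw [← add_assoc, add_neg_self, one_add]
  have h : a * (a⁻¹ + a⁻¹) + a * (a⁻¹ + (neg a⁻¹ + a⁻¹)) =
      a * ((a⁻¹ + a⁻¹) + (neg a⁻¹ + a⁻¹)) := (circ_add a (a⁻¹ + a⁻¹) (neg a⁻¹ + a⁻¹)).symm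
  rw [hc] at h
  have h2 : (a⁻¹ + a⁻¹) + (neg a⁻¹ + a⁻¹) = a⁻¹ + a⁻¹ := by
    rw [add_assoc, hc]
  rw [h2, mul_inv_cancel] at h
  exact h

lemma neg_add_self {x : B} (hx : x + 1 = x) : neg x + x = 1 := by
  have h : x + (neg x + x) = x + 1 := by
    rw [← add_assoc, add_neg_self, one_add, hx]
  exact add_left_cancel x (neg x + x) 1 h

lemma neg_gp (b : B) : neg (b + 1) = neg b := by
  have h1 : (b + 1) + neg (b + 1) = 1 := add_neg_self (b + 1)
  have h2 : (b + 1) + neg b = 1 := by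
    rw [add_assoc, one_add, add_neg_self]
  exact (add_left_cancel (b + 1) (neg (b+1)) (neg b) (h1.trans h2.symm))

lemma idem_add_one {e : B} (he : e + e = e) : e + 1 = 1 := by
  have h : (e + 1) + (e + 1) = (e + 1) + 1 := by
    calc (e + 1) + (e + 1) = e + ((1 + e) + 1) := by rw [add_assoc, add_assoc]
      _ = (e + e) + 1 := by rw [one_add, ← add_assoc]
      _ = e + 1 := by rw [he]
      _ = (e + 1) + 1 := by rw [add_assoc, one_add]
  exact add_left_cancel (e + 1) _ _ h

lemma idem_absorb {e : B} (he : e + e = e) (z : B) : e + z = z := by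
  calc e + z = e + (1 + z) := by rw [one_add]
    _ = (e + 1) + z := by rw [add_assoc]
    _ = 1 + z := by rw [idem_add_one he]
    _ = z := one_add z

lemma neg_one : neg (1 : B) = 1 := by
  show (1 : B) * (1⁻¹ + 1⁻¹) = 1
  rw [inv_one, one_mul, one_add]

lemma neg_idem {e : B} (he : e + e = e) : neg e = 1 := by
  have := neg_gp e
  rw [idem_add_one he, neg_one] at this
  exact this.symm

lemma ep_eq (b : B) : ep b = neg b + b := by
  show neg (b + 1) + b = neg b + b
  rw [neg_gp]

lemma ep_idem (b : B) : ep b + ep b = ep b := by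
  rw [ep_eq]
  calc (neg b + b) + (neg b + b) = neg b + ((b + neg b) + b) := by
        rw [add_assoc, add_assoc]
    _ = neg b + b := by rw [add_neg_self, one_add]

lemma neg_add_absorb (y z : B) : neg y + (y + z) = z := by
  rw [← add_assoc, ← ep_eq]
  exact idem_absorb (ep_idem y) z

lemma add_neg_absorb (y z : B) : y + (neg y + z) = z := by
  rw [← add_assoc, add_neg_self, one_add]

lemma neg_neg_eq (b : B) : neg (neg b) = b + 1 := by
  have h1 : neg b + neg (neg b) = 1 := add_neg_self (neg b)
  have h2 : neg b + (b + 1) = 1 := by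
    rw [← add_assoc, ← ep_eq (b := b)]
    exact idem_add_one (ep_idem b)
  exact add_left_cancel (neg b) _ _ (h1.trans h2.symm)

lemma neg_add_rev (u v : B) : neg (u + v) = neg v + neg u := by
  have h1 : (u + v) + neg (u + v) = 1 := add_neg_self (u + v)
  have h2 : (u + v) + (neg v + neg u) = 1 := by
    rw [add_assoc, ← add_assoc v, add_neg_self, one_add, add_neg_self]
  exact add_left_cancel (u + v) _ _ (h1.trans h2.symm)

lemma lam_inv_eq_neg (a : B) : lam a a⁻¹ = neg a := rfl

lemma dot_eq (a b : B) : dot a b = lam a b + neg b := by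
  show lam a a⁻¹ + a * b + lam b b⁻¹ = lam a b + neg b
  rw [lam_inv_eq_neg, lam_inv_eq_neg, mul_eq_add_lam, add_assoc, add_assoc a]
  exact neg_add_absorb a _

lemma dot_add_one (a b : B) : dot a b + 1 = dot a b := by
  rw [dot_eq, add_assoc, neg_add_one]

lemma lam_one_idem (a : B) : lam a 1 + lam a 1 = lam a 1 := lam_idem (one_add 1) a

lemma dot_one (a : B) : dot a 1 = 1 := by
  rw [dot_eq, neg_one, idem_add_one (lam_one_idem a)]

lemma dot_idem {e : B} (he : e + e = e) (a : B) : dot a e = 1 := by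
  rw [dot_eq, neg_idem he, idem_add_one (lam_idem he a)]
lemma eq_neg_add {D X Y : B} (h : D + X = Y) : X = neg D + Y := by
  rw [← h, neg_add_absorb]

lemma add_neg_cancel_right {X : B} (hX : X + 1 = X) (C : B) : (X + C) + neg C = X := by
  rw [add_assoc, add_neg_self, hX]

lemma gp_lam (a y : B) : dot a y + (y + 1) = lam a y + 1 := by
  rw [dot_eq, add_assoc, ← add_assoc (neg y), ← ep_eq, idem_add_one (ep_idem y)]

lemma neg_lam (b y : B) : neg (lam b y) = neg y + neg (dot b y) := by
  calc neg (lam b y) = neg (lam b y + 1) := (neg_gp _).symm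
    _ = neg (dot b y + (y + 1)) := by rw [gp_lam]
    _ = neg (y + 1) + neg (dot b y) := neg_add_rev _ _
    _ = neg y + neg (dot b y) := by rw [neg_gp]

lemma dot_GD (a u v : B) : dot a (u + v) = lam a u + (dot a v + neg u) := by
  rw [dot_eq, lam_add, neg_add_rev, add_assoc, ← add_assoc (lam a v), ← dot_eq]

lemma dot_S1 (a u v : B) : dot a (u + v) = dot a u + (u + (dot a v + neg u)) := by
  rw [dot_GD, dot_eq a u, add_assoc, neg_add_absorb]

lemma starshift (a y : B) : dot a (neg y) + neg y = neg y + neg (dot a y) := by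
  have h1 : dot a (y + neg y) = 1 := by rw [add_neg_self, dot_one]
  have h2 := dot_S1 a y (neg y)
  rw [h1] at h2
  have h3 : dot a y + (y + (dot a (neg y) + neg y)) = dot a y + neg (dot a y) := by
    rw [← h2, add_neg_self]
  have h4 := add_left_cancel _ _ _ h3
  have h5 := congrArg (fun z => neg y + z) h4
  simpa only [neg_add_absorb] using h5

lemma dot_neg {x : B} (hx : x + 1 = x) (a : B) :
    dot a (neg x) = neg x + (neg (dot a x) + x) := by
  have h := congrArg (fun z => z + x) (starshift a x)
  rw [add_assoc, add_assoc, neg_add_self hx, dot_add_one] at h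
  exact h

lemma dot_KEY (a b y : B) : dot (a * b) y = dot a (lam b y) + dot b y := by
  have : dot a (lam b y) + dot b y
      = lam (a * b) y + ((neg y + neg (dot b y)) + dot b y) := by
    rw [dot_eq a (lam b y), lam_lam, neg_lam, add_assoc]
  rw [this, add_assoc (neg y), neg_add_self (dot_add_one b y), neg_add_one, ← dot_eq]

lemma dot_KEY2 (a x y : B) :
    dot a (dot x y) = dot (a * x) y + (neg (dot a y) + neg (dot x y)) := by
  calc dot a (dot x y) = dot a (lam x y + neg y) := by rw [← dot_eq]
    _ = lam a (lam x y) + (dot a (neg y) + neg (lam x y)) := dot_GD _ _ _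
    _ = lam (a * x) y + ((dot a (neg y) + neg y) + neg (dot x y)) := by
        rw [lam_lam, neg_lam, add_assoc, ← add_assoc (dot a (neg y))]
    _ = lam (a * x) y + ((neg y + neg (dot a y)) + neg (dot x y)) := by rw [starshift]
    _ = (lam (a * x) y + neg y) + (neg (dot a y) + neg (dot x y)) := by
        rw [add_assoc, add_assoc]
    _ = dot (a * x) y + (neg (dot a y) + neg (dot x y)) := by rw [← dot_eq]

lemma dot_absKey (a x y : B) :
    dot a (dot x y) = dot (a * x * a⁻¹) (lam a y) + neg (dot x y) := by
  have hb : dot (a * x) y = dot (a * x * a⁻¹) (lam a y) + dot a y := by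
    have := dot_KEY (a * x * a⁻¹) a y
    rw [inv_mul_cancel_right] at this
    exact this
  rw [dot_KEY2, hb, add_assoc, add_neg_absorb]

lemma dot_CONJ (x b y : B) :
    b + (dot x y + neg b) = neg (dot x b) + dot x (b + y) := by
  exact eq_neg_add (dot_S1 x b y).symm
/-! ### Closure machinery -/

lemma addClosure_subset {S T : Set B} (h1 : S ⊆ T) (h2 : (1:B) ∈ T)
    (h3 : ∀ x ∈ T, ∀ y ∈ T, x + y ∈ T) (h4 : ∀ x ∈ T, neg x ∈ T) :
    addClosure S ⊆ T := fun _ hz => Set.mem_sInter.1 hz T ⟨h1, h2, h3, h4⟩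

lemma subset_addClosure (S : Set B) : S ⊆ addClosure S :=
  fun _ hs => Set.mem_sInter.2 fun _ hT => hT.1 hs

lemma one_mem_addClosure (S : Set B) : (1:B) ∈ addClosure S :=
  Set.mem_sInter.2 fun _ hT => hT.2.1

lemma add_mem_addClosure {S : Set B} {x y : B} (hx : x ∈ addClosure S)
    (hy : y ∈ addClosure S) : x + y ∈ addClosure S :=
  Set.mem_sInter.2 fun T hT =>
    hT.2.2.1 x (Set.mem_sInter.1 hx T hT) y (Set.mem_sInter.1 hy T hT)

lemma neg_mem_addClosure {S : Set B} {x : B} (hx : x ∈ addClosure S) :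
    neg x ∈ addClosure S :=
  Set.mem_sInter.2 fun T hT => hT.2.2.2 x (Set.mem_sInter.1 hx T hT)

lemma gfix_addClosure {S : Set B} (hS : ∀ z ∈ S, z + 1 = z) :
    ∀ z ∈ addClosure S, z + 1 = z := by
  intro z hz
  have : addClosure S ⊆ {z | z ∈ addClosure S ∧ z + 1 = z} := by
    apply addClosure_subset
    · exact fun s hs => ⟨subset_addClosure S hs, hS s hs⟩
    · exact ⟨one_mem_addClosure S, one_add 1⟩
    · rintro x ⟨hx1, hx2⟩ y ⟨hy1, hy2⟩
      exact ⟨add_mem_addClosure hx1 hy1, by rw [add_assoc, hy2]⟩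
    · rintro x ⟨hx1, _⟩
      exact ⟨neg_mem_addClosure hx1, neg_add_one x⟩
  exact (this hz).2

lemma mem_dotSet_of {X Y : Set B} {x y : B} (hx : x ∈ X) (hy : y ∈ Y) :
    dot x y ∈ dotSet X Y :=
  subset_addClosure _ ⟨x, hx, y, hy, rfl⟩

lemma one_mem_dotSet (X Y : Set B) : (1:B) ∈ dotSet X Y := one_mem_addClosure _

lemma add_mem_dotSet {X Y : Set B} {x y : B} (hx : x ∈ dotSet X Y)
    (hy : y ∈ dotSet X Y) : x + y ∈ dotSet X Y := add_mem_addClosure hx hy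

lemma neg_mem_dotSet {X Y : Set B} {x : B} (hx : x ∈ dotSet X Y) :
    neg x ∈ dotSet X Y := neg_mem_addClosure hx

lemma gfix_dotSet {X Y : Set B} : ∀ z ∈ dotSet X Y, z + 1 = z := by
  apply gfix_addClosure
  rintro z ⟨x, _, y, _, rfl⟩
  exact dot_add_one x y

lemma dotSet_subset {X Y : Set B} {T : Set B}
    (hgen : ∀ x ∈ X, ∀ y ∈ Y, dot x y ∈ T) (h2 : (1:B) ∈ T)
    (h3 : ∀ x ∈ T, ∀ y ∈ T, x + y ∈ T) (h4 : ∀ x ∈ T, neg x ∈ T) :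
    dotSet X Y ⊆ T := by
  apply addClosure_subset _ h2 h3 h4
  rintro z ⟨x, hx, y, hy, rfl⟩
  exact hgen x hx y hy

lemma dotSet_mono {X X' Y Y' : Set B} (hX : X ⊆ X') (hY : Y ⊆ Y') :
    dotSet X Y ⊆ dotSet X' Y' :=
  dotSet_subset (fun x hx y hy => mem_dotSet_of (hX hx) (hY hy))
    (one_mem_dotSet _ _) (fun _ hx _ hy => add_mem_dotSet hx hy)
    (fun _ hx => neg_mem_dotSet hx)

/-! ### addE -/

lemma addE_mono {S S' : Set B} (h : S ⊆ S') : addE S ⊆ addE S' := by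
  rintro z ⟨s, hs, e, he, rfl⟩
  exact ⟨s, h hs, e, he, rfl⟩

lemma gp_add_ep (b : B) : (b + 1) + ep b = b := by
  unfold ep gp
  exact add_neg_absorb (b + 1) b

lemma ep_mem_E (b : B) : ep b ∈ E B := ep_idem b

lemma mem_addE_of_gp {S : Set B} {z : B} (h : z + 1 ∈ S) : z ∈ addE S :=
  ⟨z + 1, h, ep z, ep_mem_E z, (gp_add_ep z).symm⟩

lemma gp_mem_of_mem_addE {S : Set B} (hS : ∀ s ∈ S, s + 1 = s) {z : B}
    (h : z ∈ addE S) : z + 1 ∈ S := by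
  obtain ⟨s, hs, e, he, rfl⟩ := h
  have : (s + e) + 1 = s := by
    rw [add_assoc, idem_add_one he, hS s hs]
  rw [this]; exact hs

lemma E_subset_addE {S : Set B} (h1 : (1:B) ∈ S) : E B ⊆ addE S :=
  fun e he => ⟨1, h1, e, he, (one_add e).symm⟩

lemma mem_E_iff {z : B} : z ∈ E B ↔ z + 1 = 1 := by
  constructor
  · exact fun h => idem_add_one h
  · intro h
    show z + z = z
    have hz : z = ep z := by
      conv_lhs => rw [← gp_add_ep z]
      rw [h, one_add]
    have h2 := ep_idem z
    rw [← hz] at h2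
    exact h2

/-! ### Conjugation closure of `dotSet X univ` -/

lemma conj_add (b x y : B) :
    b + ((x + y) + neg b) = (b + (x + neg b)) + (b + (y + neg b)) := by
  rw [add_assoc b (x + neg b), add_assoc x (neg b), neg_add_absorb, add_assoc x y]

lemma conj_neg (b z : B) : b + (neg z + neg b) = neg (b + (z + neg b)) := by
  rw [neg_add_rev b (z + neg b), neg_add_rev z (neg b), neg_neg_eq,
    add_assoc b 1 (neg z), one_add, add_assoc b (neg z) (neg b)]

lemma conj_mem_dotSet_univ {X : Set B} (b : B) {z : B} (hz : z ∈ dotSet X Set.univ) :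
    b + (z + neg b) ∈ dotSet X Set.univ := by
  have : dotSet X Set.univ ⊆
      {z | z ∈ dotSet X Set.univ ∧ b + (z + neg b) ∈ dotSet X Set.univ} := by
    apply addClosure_subset
    · rintro w ⟨x, hx, y, _, rfl⟩
      refine ⟨mem_dotSet_of hx (Set.mem_univ y), ?_⟩
      rw [dot_CONJ]
      exact add_mem_dotSet (neg_mem_dotSet (mem_dotSet_of hx (Set.mem_univ b)))
        (mem_dotSet_of hx (Set.mem_univ (b + y)))
    · refine ⟨one_mem_dotSet _ _, ?_⟩
      rw [one_add, add_neg_self]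
      exact one_mem_dotSet _ _
    · rintro x ⟨hx1, hx2⟩ y ⟨hy1, hy2⟩
      refine ⟨add_mem_dotSet hx1 hy1, ?_⟩
      rw [conj_add]
      exact add_mem_dotSet hx2 hy2
    · rintro x ⟨hx1, hx2⟩
      refine ⟨neg_mem_dotSet hx1, ?_⟩
      rw [conj_neg]
      exact neg_mem_dotSet hx2
  exact (this hz).2
/-! ### Sum sets `N + H` with `N` conjugation-closed -/

/-- A subset closed under the additive subgroup operations, consisting of
group-part-fixed elements. -/
def IsClosed (S : Set B) : Prop :=
  (1:B) ∈ S ∧ (∀ x ∈ S, ∀ y ∈ S, x + y ∈ S) ∧ (∀ x ∈ S, neg x ∈ S) ∧ ∀ x ∈ S, x + 1 = x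

/-- closed under conjugation by arbitrary elements. -/
def IsNConj (S : Set B) : Prop := ∀ b : B, ∀ z ∈ S, b + (z + neg b) ∈ S

lemma isClosed_dotSet (X Y : Set B) : IsClosed (dotSet X Y) :=
  ⟨one_mem_dotSet X Y, fun _ hx _ hy => add_mem_dotSet hx hy,
    fun _ hx => neg_mem_dotSet hx, gfix_dotSet⟩

lemma isNConj_dotSet_univ (X : Set B) : IsNConj (dotSet X Set.univ) :=
  fun b _ hz => conj_mem_dotSet_univ b hz

def sumSet (N H : Set B) : Set B := {z | ∃ n ∈ N, ∃ h ∈ H, z = n + h}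

variable {N H : Set B}

lemma sumSet_subset_left (hN : IsClosed N) (hH : IsClosed H) : N ⊆ sumSet N H :=
  fun n hn => ⟨n, hn, 1, hH.1, (hN.2.2.2 n hn).symm⟩

lemma sumSet_subset_right (_hN : IsClosed N) : H ⊆ sumSet N H :=
  fun h hh => ⟨1, ‹IsClosed N›.1, h, hh, (one_add h).symm⟩

lemma mem_sumSet_swap (hNc : IsNConj N) {h n : B} (hh : h ∈ H) (hgh : h + 1 = h)
    (hgn : n + 1 = n) (hn : n ∈ N) : h + n ∈ sumSet N H := by
  refine ⟨h + (n + neg h), hNc h n hn, h, hh, ?_⟩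
  rw [add_assoc, add_assoc, neg_add_self hgh, hgn]

lemma isClosed_sumSet (hN : IsClosed N) (hNc : IsNConj N) (hH : IsClosed H) :
    IsClosed (sumSet N H) := by
  refine ⟨⟨1, hN.1, 1, hH.1, (one_add 1).symm⟩, ?_, ?_, ?_⟩
  · rintro _ ⟨n, hn, h, hh, rfl⟩ _ ⟨n', hn', h', hh', rfl⟩
    refine ⟨n + (h + (n' + neg h)), hN.2.1 n hn _ (hNc h n' hn'), h + h',
      hH.2.1 h hh h' hh', ?_⟩
    rw [add_assoc n h, add_assoc n (h + (n' + neg h)) (h + h'),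
      add_assoc h (n' + neg h), add_assoc n' (neg h), neg_add_absorb]
  · rintro _ ⟨n, hn, h, hh, rfl⟩
    rw [neg_add_rev]
    exact mem_sumSet_swap hNc (hH.2.2.1 h hh) (neg_add_one h) (neg_add_one n)
      (hN.2.2.1 n hn)
  · rintro _ ⟨n, hn, h, hh, rfl⟩
    rw [add_assoc, hH.2.2.2 h hh]

lemma sumSet_mono_right {H' : Set B} (h : H ⊆ H') : sumSet N H ⊆ sumSet N H' := by
  rintro _ ⟨n, hn, x, hx, rfl⟩
  exact ⟨n, hn, x, h hx, rfl⟩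

lemma sumSet_collapse (hN : IsClosed N) : sumSet N (sumSet N H) ⊆ sumSet N H := by
  rintro _ ⟨n, hn, _, ⟨n', hn', h, hh, rfl⟩, rfl⟩
  exact ⟨n + n', hN.2.1 n hn n' hn', h, hh, (add_assoc n n' h).symm⟩

lemma sumSet_subset_of_trivial (hN : IsClosed N) (hH : H ⊆ {(1:B)}) :
    sumSet N H ⊆ N := by
  rintro _ ⟨n, hn, h, hh, rfl⟩
  have : h = 1 := hH hh
  rw [this, hN.2.2.2 n hn]
  exact hn
/-! ### Series basics -/

/-- The subgroup part of `rightSeries (k+1)`. -/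
def Rcore (B : Type*) [LeftSemiBrace B] (k : ℕ) : Set B :=
  dotSet (rightSeries B k) Set.univ

/-- The subgroup part of `leftSeries (r+1)`. -/
def Lcore (B : Type*) [LeftSemiBrace B] (r : ℕ) : Set B :=
  dotSet Set.univ (leftSeries B r)

lemma rightSeries_succ (k : ℕ) : rightSeries B (k+1) = addE (Rcore B k) := rfl

lemma leftSeries_succ (r : ℕ) : leftSeries B (r+1) = addE (Lcore B r) := rfl

lemma rightSeries_dec (k : ℕ) : rightSeries B (k+1) ⊆ rightSeries B k := by
  induction k with
  | zero => exact Set.subset_univ _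
  | succ k ih =>
      rw [rightSeries_succ, rightSeries_succ]
      exact addE_mono (dotSet_mono ih (le_refl _))

lemma leftSeries_dec (r : ℕ) : leftSeries B (r+1) ⊆ leftSeries B r := by
  induction r with
  | zero => exact Set.subset_univ _
  | succ r ih =>
      rw [leftSeries_succ, leftSeries_succ]
      exact addE_mono (dotSet_mono (le_refl _) ih)

lemma gp_gfix (x : B) : (x + 1) + 1 = x + 1 := by
  rw [add_assoc, one_add 1]

/-- Absorption: `dot a u ∈ Rcore k` for `u ∈ Rcore k`, given `∘`-normality of
`rightSeries k`. -/
lemma abs_of_norm {k : ℕ}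
    (hnorm : ∀ x ∈ rightSeries B k, ∀ c : B, c * x * c⁻¹ ∈ rightSeries B k) :
    ∀ a : B, ∀ u ∈ Rcore B k, dot a u ∈ Rcore B k := by
  intro a u hu
  have main : Rcore B k ⊆ {u | u ∈ Rcore B k ∧ ∀ a : B, dot a u ∈ Rcore B k} := by
    apply addClosure_subset
    · rintro z ⟨x, hx, y, -, rfl⟩
      refine ⟨mem_dotSet_of hx trivial, fun a => ?_⟩
      rw [dot_absKey]
      exact add_mem_dotSet (mem_dotSet_of (hnorm x hx a) trivial)
        (neg_mem_dotSet (mem_dotSet_of hx trivial))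
    · refine ⟨one_mem_dotSet _ _, fun a => ?_⟩
      rw [dot_one]; exact one_mem_dotSet _ _
    · rintro x ⟨hx1, hx2⟩ y ⟨hy1, hy2⟩
      refine ⟨add_mem_dotSet hx1 hy1, fun a => ?_⟩
      rw [dot_S1]
      exact add_mem_dotSet (hx2 a) (conj_mem_dotSet_univ x (hy2 a))
    · rintro x ⟨hx1, hx2⟩
      refine ⟨neg_mem_dotSet hx1, fun a => ?_⟩
      have hgx : x + 1 = x := gfix_dotSet x hx1
      have : dot a (neg x) = neg x + (neg (dot a x) + neg (neg x)) := by
        rw [neg_neg_eq, dot_neg hgx]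
        rw [show neg (dot a x) + (x + 1) = neg (dot a x) + x from by rw [← add_assoc,
          add_assoc, hgx]]
      rw [this]
      exact conj_mem_dotSet_univ (neg x) (neg_mem_dotSet (hx2 a))
  exact (main hu).2 a

lemma norm_rightSeries : ∀ k : ℕ, ∀ x ∈ rightSeries B k, ∀ c : B,
    c * x * c⁻¹ ∈ rightSeries B k := by
  intro k
  induction k with
  | zero => exact fun x _ c => trivial
  | succ k ih =>
    intro x hx c
    have habs := abs_of_norm ih
    have hxk : x ∈ rightSeries B k := rightSeries_dec k hx
    have hs : x + 1 ∈ Rcore B k :=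
      gp_mem_of_mem_addE gfix_dotSet hx
    -- notation
    set d := c * x * c⁻¹ with hd
    -- step 5 : c⁻¹ + 1 = neg (dot c c⁻¹) + neg c
    have h5 : c⁻¹ + 1 = neg (dot c c⁻¹) + neg c := by
      have e1 : (1 : B) = c + (dot c c⁻¹ + (c⁻¹ + 1)) := by
        calc (1 : B) = c * c⁻¹ + 1 := by rw [mul_inv_cancel, one_add]
          _ = (c + lam c c⁻¹) + 1 := by rw [mul_eq_add_lam]
          _ = c + (lam c c⁻¹ + 1) := add_assoc _ _ _
          _ = c + (dot c c⁻¹ + (c⁻¹ + 1)) := by rw [← gp_lam]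
      have e2 : c + (dot c c⁻¹ + (c⁻¹ + 1)) = c + neg c := by
        rw [← e1, add_neg_self]
      have e3 := add_left_cancel _ _ _ e2
      exact eq_neg_add e3
    -- step 7 : dot c (lam x c⁻¹) = (dot d (lam c c⁻¹) + dot c c⁻¹) + neg (dot x c⁻¹)
    have h7 : dot c (lam x c⁻¹) = (dot d (lam c c⁻¹) + dot c c⁻¹) + neg (dot x c⁻¹) := by
      have h1 := dot_KEY c x c⁻¹
      have hdc : d * c = c * x := by rw [hd, inv_mul_cancel_right]
      have h2 := dot_KEY d c c⁻¹
      rw [hdc] at h2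
      have h3 := congrArg (fun t => t + neg (dot x c⁻¹)) h1
      rw [add_neg_cancel_right (dot_add_one c (lam x c⁻¹))] at h3
      rw [← h3, h2]
    -- step 8 : lam c x
    have h8 : lam c x = (dot c (x+1) + (x+1)) +
        (ep (lam c (x+1)) + lam c (ep x)) := by
      conv_lhs => rw [← gp_add_ep x]
      rw [lam_add]
      conv_lhs => rw [← gp_add_ep (lam c (x+1))]
      rw [add_assoc]
      congr 1
      rw [← gp_lam, gp_gfix]
    -- step 6 : dot c (x * c⁻¹)
    have h6 : dot c (x * c⁻¹) = lam c x + (dot c (lam x c⁻¹) + neg x) := by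
      conv_lhs => rw [mul_eq_add_lam x c⁻¹]
      exact dot_GD c x (lam x c⁻¹)
    -- step 4 : (x * c⁻¹) + 1
    have h4 : (x * c⁻¹) + 1 = x + (dot x c⁻¹ + (c⁻¹ + 1)) := by
      rw [mul_eq_add_lam x c⁻¹, add_assoc, ← gp_lam]
    -- main key computation
    have key : d + 1 = c + ((dot c (x+1) + ((x+1) + dot d (lam c c⁻¹))) + neg c) := by
      calc d + 1 = c * (x * c⁻¹) + 1 := by rw [hd, mul_assoc]
        _ = c + (lam c (x * c⁻¹) + 1) := by rw [mul_eq_add_lam, add_assoc]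
        _ = c + (dot c (x * c⁻¹) + ((x * c⁻¹) + 1)) := by rw [← gp_lam]
        _ = c + ((lam c x + (dot c (lam x c⁻¹) + neg x)) +
              (x + (dot x c⁻¹ + (c⁻¹ + 1)))) := by rw [h6, h4]
        _ = c + ((((dot c (x+1) + (x+1)) + (ep (lam c (x+1)) + lam c (ep x))) +
              (((dot d (lam c c⁻¹) + dot c c⁻¹) + neg (dot x c⁻¹)) + neg x)) +
              (x + (dot x c⁻¹ + (neg (dot c c⁻¹) + neg c)))) := by rw [h8, h7, h5]
        _ = c + ((dot c (x+1) + ((x+1) + dot d (lam c c⁻¹))) + neg c) := by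
            simp only [add_assoc]
            rw [neg_add_absorb x, neg_add_absorb (dot x c⁻¹),
              add_neg_absorb (dot c c⁻¹), idem_absorb (ep_idem (lam c (x+1))),
              idem_absorb (lam_idem (ep_idem x) c)]
    -- conclude
    have hJ : (dot c (x+1) + ((x+1) + dot d (lam c c⁻¹))) ∈ Rcore B k := by
      refine add_mem_dotSet (habs c _ hs) (add_mem_dotSet hs ?_)
      exact mem_dotSet_of (ih x hxk c) trivial
    have : d + 1 ∈ Rcore B k := by
      rw [key]
      exact conj_mem_dotSet_univ c hJ
    exact mem_addE_of_gp this

lemma abs_Rcore (k : ℕ) : ∀ a : B, ∀ u ∈ Rcore B k, dot a u ∈ Rcore B k :=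
  abs_of_norm (norm_rightSeries k)
/-! ### The auxiliary chain and comparison with the left series -/

lemma dot_add_idem (a s : B) {e : B} (he : e + e = e) : dot a (s + e) = dot a s := by
  rw [dot_S1, dot_idem he a, one_add, add_neg_self, dot_add_one]

/-- The relative left chain used in the induction. -/
def Ich (B : Type*) [LeftSemiBrace B] (j : ℕ) : ℕ → Set B
  | 0 => Rcore B j
  | r + 1 => dotSet Set.univ (addE (sumSet (Rcore B (j+1)) (Ich B j r)))

lemma Ich_zero (j : ℕ) : Ich B j 0 = Rcore B j := by rw [Ich]

lemma Ich_succ (j r : ℕ) :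
    Ich B j (r+1) = dotSet Set.univ (addE (sumSet (Rcore B (j+1)) (Ich B j r))) := by
  rw [Ich]

lemma isClosed_Ich (j r : ℕ) : IsClosed (Ich B j r) := by
  cases r with
  | zero => rw [Ich_zero]; exact isClosed_dotSet _ _
  | succ r => rw [Ich_succ]; exact isClosed_dotSet _ _

lemma cmp_main (j r : ℕ) :
    dotSet Set.univ (addE (sumSet (Rcore B (j+1)) (Lcore B r))) ⊆
      sumSet (Rcore B (j+1)) (Lcore B (r+1)) := by
  have hN : IsClosed (Rcore B (j+1)) := isClosed_dotSet _ _
  have hNc : IsNConj (Rcore B (j+1)) := isNConj_dotSet_univ _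
  have hH : IsClosed (Lcore B (r+1)) := isClosed_dotSet _ _
  have hT := isClosed_sumSet hN hNc hH
  apply dotSet_subset _ hT.1 hT.2.1 hT.2.2.1
  rintro a - y ⟨s, hs, e, he, rfl⟩
  rw [dot_add_idem a s he]
  obtain ⟨n, hn, v, hv, rfl⟩ := hs
  have hgv : v + 1 = v := gfix_dotSet v hv
  have hm : neg v + (n + v) ∈ Rcore B (j+1) := by
    have h1 := hNc (neg v) n hn
    rw [neg_neg_eq, ← add_assoc n v 1, show (n + v) + 1 = n + v from by
      rw [add_assoc, hgv]] at h1
    exact h1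
  have hkey : dot a (n + v) = dot a v + (v + (dot a (neg v + (n + v)) + neg v)) := by
    conv_lhs => rw [show n + v = v + (neg v + (n + v)) from (add_neg_absorb v (n+v)).symm]
    exact dot_S1 a v _
  rw [hkey]
  have hvr : v ∈ leftSeries B (r+1) := by
    rw [leftSeries_succ]
    exact mem_addE_of_gp (by rw [hgv]; exact hv)
  have hdav : dot a v ∈ Lcore B (r+1) := mem_dotSet_of trivial hvr
  have hX : v + (dot a (neg v + (n + v)) + neg v) ∈ Rcore B (j+1) :=
    hNc v _ (abs_Rcore (j+1) a _ hm)
  exact mem_sumSet_swap hNc hdav (dot_add_one a v) (gfix_dotSet _ hX) hX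

lemma cmp_chain (j : ℕ) : ∀ r, Ich B j (r+1) ⊆ sumSet (Rcore B (j+1)) (Lcore B r) := by
  have hN : IsClosed (Rcore B (j+1)) := isClosed_dotSet _ _
  intro r
  induction r with
  | zero =>
      rw [Ich_succ]
      have h1 : dotSet Set.univ (addE (sumSet (Rcore B (j+1)) (Ich B j 0))) ⊆
          Lcore B 0 :=
        dotSet_mono (le_refl _) (Set.subset_univ _)
      exact h1.trans (sumSet_subset_right hN)
  | succ r ih =>
      rw [Ich_succ]
      have h1 : addE (sumSet (Rcore B (j+1)) (Ich B j (r+1))) ⊆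
          addE (sumSet (Rcore B (j+1)) (Lcore B r)) :=
        addE_mono (fun z hz => sumSet_collapse hN ((sumSet_mono_right ih) hz))
      exact (dotSet_mono (le_refl _) h1).trans (cmp_main j r)

lemma Lcore_trivial {γ : ℕ} (hγ : leftSeries B γ = E B) :
    Lcore B γ ⊆ {(1:B)} := by
  apply dotSet_subset
  · intro x _ y hy
    rw [hγ] at hy
    simp only [Set.mem_singleton_iff]
    exact dot_idem hy x
  · rfl
  · intro x hx y hy
    simp only [Set.mem_singleton_iff] at *
    rw [hx, hy, one_add]
  · intro x hx
    simp only [Set.mem_singleton_iff] at *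
    rw [hx, neg_one]

lemma step_lemma (j : ℕ) {γ : ℕ} (hγ : leftSeries B γ = E B) {N0 : ℕ}
    (hP : ∀ n, N0 ≤ n → bracketSeries B n ⊆ rightSeries B (j+1)) :
    ∃ N1, ∀ n, N1 ≤ n → bracketSeries B n ⊆ rightSeries B (j+2) := by
  have hN : IsClosed (Rcore B (j+1)) := isClosed_dotSet _ _
  have hNc : IsNConj (Rcore B (j+1)) := isNConj_dotSet_univ _
  have T : ∀ r, ∃ M, ∀ n, M ≤ n →
      bracketSeries B n ⊆ addE (sumSet (Rcore B (j+1)) (Ich B j r)) := by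
    intro r
    induction r with
    | zero =>
        refine ⟨N0, fun n hn => (hP n hn).trans ?_⟩
        rw [rightSeries_succ j, Ich_zero]
        exact addE_mono (sumSet_subset_right hN)
    | succ r ihr =>
        obtain ⟨M, hM⟩ := ihr
        refine ⟨M + N0 + 1, fun n hn => ?_⟩
        obtain ⟨m, rfl⟩ : ∃ m, n = m + 1 := ⟨n - 1, by omega⟩
        rw [bracketSeries]
        apply addE_mono
        have hcl := isClosed_sumSet hN hNc (isClosed_Ich j (r+1))
        apply addClosure_subset _ hcl.1 hcl.2.1 hcl.2.2.1
        rintro z hz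
        rw [Set.mem_iUnion] at hz
        obtain ⟨i, hzi⟩ := hz
        by_cases hi : N0 ≤ i.1
        · have hsub : dotSet (bracketSeries B i.1) (bracketSeries B (m - i.1)) ⊆
              Rcore B (j+1) :=
            dotSet_mono (hP i.1 hi) (Set.subset_univ _)
          exact sumSet_subset_left hN (isClosed_Ich j (r+1)) (hsub hzi)
        · have hlt := i.isLt
          have him : M ≤ m - i.1 := by omega
          have hsub : dotSet (bracketSeries B i.1) (bracketSeries B (m - i.1)) ⊆
              Ich B j (r+1) := by
            rw [Ich_succ]
            exact dotSet_mono (Set.subset_univ _) (hM _ him)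
          exact sumSet_subset_right hN (hsub hzi)
  obtain ⟨M, hM⟩ := T (γ + 1)
  refine ⟨M, fun n hn => (hM n hn).trans ?_⟩
  rw [show j + 2 = (j + 1) + 1 from rfl, rightSeries_succ (j+1)]
  apply addE_mono
  intro z hz
  have h1 : sumSet (Rcore B (j+1)) (Ich B j (γ+1)) ⊆
      sumSet (Rcore B (j+1)) (sumSet (Rcore B (j+1)) (Lcore B γ)) :=
    sumSet_mono_right (cmp_chain j γ)
  have h2 := sumSet_collapse hN (h1 hz)
  have h3 : sumSet (Rcore B (j+1)) (Lcore B γ) ⊆ Rcore B (j+1) :=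
    sumSet_subset_of_trivial hN (Lcore_trivial hγ)
  exact h3 h2
/-! ### Comparison of the series and the base case -/

lemma rightSeries_zero : rightSeries B 0 = Set.univ := by rw [rightSeries]

lemma leftSeries_zero : leftSeries B 0 = Set.univ := by rw [leftSeries]

lemma bracketSeries_zero : bracketSeries B 0 = Set.univ := by rw [bracketSeries]

lemma E_subset_rightSeries (n : ℕ) : E B ⊆ rightSeries B n := by
  cases n with
  | zero => rw [rightSeries_zero]; exact Set.subset_univ _
  | succ k => rw [rightSeries_succ]; exact E_subset_addE (one_mem_dotSet _ _)

lemma E_subset_leftSeries (n : ℕ) : E B ⊆ leftSeries B n := by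
  cases n with
  | zero => rw [leftSeries_zero]; exact Set.subset_univ _
  | succ k => rw [leftSeries_succ]; exact E_subset_addE (one_mem_dotSet _ _)

lemma E_subset_bracketSeries (n : ℕ) : E B ⊆ bracketSeries B n := by
  cases n with
  | zero => rw [bracketSeries_zero]; exact Set.subset_univ _
  | succ m => rw [bracketSeries]; exact E_subset_addE (one_mem_addClosure _)

lemma right_subset_bracket : ∀ n, rightSeries B n ⊆ bracketSeries B n := by
  intro n
  induction n with
  | zero => rw [rightSeries_zero, bracketSeries_zero]
  | succ n ih =>
      rw [rightSeries_succ, bracketSeries]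
      apply addE_mono
      intro z hz
      apply subset_addClosure
      rw [Set.mem_iUnion]
      refine ⟨⟨n, Nat.lt_succ_self n⟩, ?_⟩
      have hsub : dotSet (rightSeries B n) Set.univ ⊆
          dotSet (bracketSeries B n) (bracketSeries B (n - n)) := by
        apply dotSet_mono ih
        intro w _
        rw [Nat.sub_self, bracketSeries_zero]
        trivial
      exact hsub hz

lemma left_subset_bracket : ∀ n, leftSeries B n ⊆ bracketSeries B n := by
  intro n
  induction n with
  | zero => rw [leftSeries_zero, bracketSeries_zero]
  | succ n ih =>
      rw [leftSeries_succ, bracketSeries]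
      apply addE_mono
      intro z hz
      apply subset_addClosure
      rw [Set.mem_iUnion]
      refine ⟨⟨0, Nat.succ_pos n⟩, ?_⟩
      have hsub : dotSet Set.univ (leftSeries B n) ⊆
          dotSet (bracketSeries B 0) (bracketSeries B (n - 0)) := by
        apply dotSet_mono
        · intro w _
          rw [bracketSeries_zero]
          trivial
        · rw [Nat.sub_zero]
          exact ih
      exact hsub hz

lemma P_one : ∀ n, 1 ≤ n → bracketSeries B n ⊆ rightSeries B 1 := by
  intro n hn
  obtain ⟨m, rfl⟩ : ∃ m, n = m + 1 := ⟨n - 1, by omega⟩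
  rw [bracketSeries, rightSeries_succ 0]
  apply addE_mono
  have hR : IsClosed (Rcore B 0) := isClosed_dotSet _ _
  apply addClosure_subset _ hR.1 hR.2.1 hR.2.2.1
  rintro z hz
  rw [Set.mem_iUnion] at hz
  obtain ⟨i, hzi⟩ := hz
  have hsub : dotSet (bracketSeries B i.1) (bracketSeries B (m - i.1)) ⊆ Rcore B 0 := by
    apply dotSet_mono _ (Set.subset_univ _)
    intro w _
    rw [rightSeries_zero]
    trivial
  exact hsub hzi
/-- `B^[α] = E` for some positive integer `α` iff `B^(β) = E` and
`B^γ = E` for some positive integers `β, γ`; i.e. `B` is strongly nilpotent iff `B`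
is both right nilpotent and left nilpotent (here `bracketSeries B n = B^[n+1]`,
`rightSeries B n = B^(n+1)` and `leftSeries B n = B^(n+1)`). -/
theorem stronglyNilpotent_iff (B : Type*) [LeftSemiBrace B] :
    (∃ n : ℕ, bracketSeries B n = E B) ↔
      (∃ m : ℕ, rightSeries B m = E B) ∧ (∃ k : ℕ, leftSeries B k = E B) := by
  constructor
  · rintro ⟨n, h⟩
    exact ⟨⟨n, subset_antisymm ((right_subset_bracket n).trans h.subset)
        (E_subset_rightSeries n)⟩,
      ⟨n, subset_antisymm ((left_subset_bracket n).trans h.subset)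
        (E_subset_leftSeries n)⟩⟩
  · rintro ⟨⟨β, hβ⟩, ⟨γ, hγ⟩⟩
    have hβ' : rightSeries B (β+1) = E B :=
      subset_antisymm ((rightSeries_dec β).trans hβ.subset) (E_subset_rightSeries _)
    have hP : ∀ k, ∃ N0 : ℕ, ∀ n, N0 ≤ n → bracketSeries B n ⊆ rightSeries B k := by
      intro k
      induction k with
      | zero =>
          refine ⟨1, fun n _ w _ => ?_⟩
          rw [rightSeries_zero]
          trivial
      | succ k ih =>
          cases k with
          | zero => exact ⟨1, P_one⟩
          | succ j =>
              obtain ⟨N0, h⟩ := ih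
              exact step_lemma j hγ h
    obtain ⟨N0, hN⟩ := hP (β + 1)
    exact ⟨N0, subset_antisymm ((hN _ le_rfl).trans hβ'.subset)
      (E_subset_bracketSeries N0)⟩

end LeftSemiBrace
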